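/- Let Y and Z be finite sets and let A ∈ DCCone(Y) and B ∈ DCCone(Z) be nonempty. If B ⪯ A (B is nondeterministically degraded with respect to A), then I(B) ≤ I(A). -/
import Mathlib


open scoped BigOperators

noncomputable section

/-- `A ⊆ ℝ^Y` is a pricing downward closed (DC) cone. -/
def IsDCCone {Y : Type*} (A : Set (Y → ℝ)) : Prop :=
  (∀ a ∈ A, ∀ γ : ℝ, 0 ≤ γ → γ • a ∈ A) ∧
  (∀ a ∈ A, ∀ b : Y → ℝ, (∀ y, 0 ≤ b y) → a - b ∈ A)

/-- Probability mass functions on a finite set `Y`. -/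
def probSimplex (Y : Type*) [Fintype Y] : Set (Y → ℝ) :=
  {p | (∀ y, 0 ≤ p y) ∧ ∑ y, p y = 1}

/-- KL divergence in bits, valued in the extended reals. -/
def KLdiv {Y : Type*} [Fintype Y] (p q : Y → ℝ) : EReal :=
  if ∀ y, q y = 0 → p y = 0 then
    (((∑ y, if p y = 0 then 0 else p y * Real.logb 2 (p y / q y)) : ℝ) : EReal)
  else ⊤

/-- Information capacity `I(A)` of a pricing DC cone `A`.  The conventions
`I(∅) = -∞` and `I(ℝ^Y) = +∞` follow from `⨆ (empty) = ⊥` and `⨅ (empty) = ⊤`. -/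
def infoCap {Y : Type*} [Fintype Y] (A : Set (Y → ℝ)) : EReal :=
  ⨅ q ∈ probSimplex Y, ⨆ a ∈ A,
    ⨅ p ∈ {p ∈ probSimplex Y | ∑ y, p y * a y ≤ 0}, KLdiv p q

/-- Semidirect product `A ⋉ F` of a cone `A ∈ DCCone(Y)` and `F : Y → DCCone(Z)`. -/
def semiProd {Y Z : Type*} (A : Set (Y → ℝ)) (F : Y → Set (Z → ℝ)) :
    Set (Y × Z → ℝ) :=
  {s | ∃ a ∈ A, ∃ f : Y → Z → ℝ, (∀ y, f y ∈ F y) ∧ s = fun q => a q.1 + f q.1 q.2}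

/-- Pushforward `π₂#S` along the second projection. -/
def proj2Push {Y Z : Type*} (S : Set (Y × Z → ℝ)) : Set (Z → ℝ) :=
  {b | (fun q : Y × Z => b q.2) ∈ S}

/-- Pushforward `F#A := π₂#(A ⋉ F)`. -/
def pushF {Y Z : Type*} (F : Y → Set (Z → ℝ)) (A : Set (Y → ℝ)) : Set (Z → ℝ) :=
  proj2Push (semiProd A F)

/-- `B` is nondeterministically degraded with respect to `A`, written `B ⪯ A`: there is a
pointwise non-informative `F : Y → DCCone(Z)` with `B ⊆ F#A`. -/
def NDDegraded {Y Z : Type*} (B : Set (Z → ℝ)) (A : Set (Y → ℝ)) : Prop :=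
  ∃ F : Y → Set (Z → ℝ),
    (∀ y, IsDCCone (F y)) ∧
    (∀ y, convexHull ℝ (F y) ≠ Set.univ) ∧
    B ⊆ pushF F A


/-- The log-sum inequality (with `0 log 0 = 0` conventions). -/
private lemma aux_logsum {ι : Type*} [Fintype ι] (a b : ι → ℝ)
    (ha : ∀ i, 0 ≤ a i) (hb : ∀ i, 0 ≤ b i) (hab : ∀ i, b i = 0 → a i = 0) :
    (if (∑ i, a i) = 0 then (0:ℝ) else (∑ i, a i) * Real.logb 2 ((∑ i, a i) / (∑ i, b i))) ≤
      ∑ i, if a i = 0 then (0:ℝ) else a i * Real.logb 2 (a i / b i) := by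
  set A := ∑ i, a i with hA
  set B := ∑ i, b i with hB
  rcases eq_or_lt_of_le (Finset.sum_nonneg fun i _ => ha i : (0:ℝ) ≤ A) with hA0 | hA0
  · rw [if_pos hA0.symm]
    apply Finset.sum_nonneg
    intro i _
    have hi : a i = 0 :=
      (Finset.sum_eq_zero_iff_of_nonneg (fun i _ => ha i)).1 hA0.symm i (Finset.mem_univ i)
    simp [hi]
  · rw [if_neg (ne_of_gt hA0)]
    have hB0 : 0 < B := by
      obtain ⟨i, -, hi⟩ := Finset.exists_lt_of_sum_lt
        (show ∑ i, (0:ℝ) < ∑ i, a i by simpa using hA0)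
      have hbi : 0 < b i := (hb i).lt_of_ne fun h => (ne_of_gt hi) (hab i h.symm)
      exact lt_of_lt_of_le hbi (Finset.single_le_sum (fun j _ => hb j) (Finset.mem_univ i))
    have hlog2 : (0:ℝ) < Real.log 2 := Real.log_pos one_lt_two
    have key : ∀ i, a i * Real.logb 2 (A / B) + (a i - b i * (A / B)) / Real.log 2
        ≤ if a i = 0 then (0:ℝ) else a i * Real.logb 2 (a i / b i) := by
      intro i
      by_cases hai : a i = 0
      · rw [if_pos hai, hai]
        have h1 : 0 ≤ b i * (A / B) := mul_nonneg (hb i) (div_nonneg hA0.le hB0.le)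
        have h2 : (0 - b i * (A / B)) / Real.log 2 ≤ 0 :=
          div_nonpos_of_nonpos_of_nonneg (by linarith) hlog2.le
        simpa using h2
      · rw [if_neg hai]
        have hai' : 0 < a i := (ha i).lt_of_ne (Ne.symm hai)
        have hbi : 0 < b i := (hb i).lt_of_ne fun h => hai (hab i h.symm)
        set x := (a i * B) / (b i * A) with hx
        have hx0 : 0 < x := div_pos (mul_pos hai' hB0) (mul_pos hbi hA0)
        have hlogx : 1 - x⁻¹ ≤ Real.log x := Real.one_sub_inv_le_log_of_pos hx0
        have hxinv : x⁻¹ = (b i * A) / (a i * B) := by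
          rw [hx, inv_div]
        have hlx : Real.log x = Real.log (a i / b i) - Real.log (A / B) := by
          rw [hx, Real.log_div (by positivity) (by positivity),
            Real.log_mul hai'.ne' hB0.ne', Real.log_mul hbi.ne' hA0.ne',
            Real.log_div hai'.ne' hbi.ne', Real.log_div hA0.ne' hB0.ne']
          ring
        have hxi : a i * x⁻¹ = b i * (A / B) := by
          rw [hxinv]; field_simp
        have h2 : a i - b i * (A / B) ≤ a i * (Real.log (a i / b i) - Real.log (A / B)) := by
          have hm := mul_le_mul_of_nonneg_left hlogx hai'.le
          rw [hlx] at hm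
          nlinarith [hm]
        have h3 : (a i - b i * (A / B)) / Real.log 2
            ≤ (a i * (Real.log (a i / b i) - Real.log (A / B))) / Real.log 2 :=
          (div_le_div_iff_of_pos_right hlog2).mpr h2
        have hexp : (a i * (Real.log (a i / b i) - Real.log (A / B))) / Real.log 2
            = a i * (Real.log (a i / b i) / Real.log 2)
              - a i * (Real.log (A / B) / Real.log 2) := by ring
        rw [hexp] at h3
        rw [Real.logb, Real.logb]
        linarith
    have hsum : ∑ i, (a i * Real.logb 2 (A / B) + (a i - b i * (A / B)) / Real.log 2)
        = A * Real.logb 2 (A / B) := by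
      rw [Finset.sum_add_distrib, ← Finset.sum_mul, ← hA]
      have h4 : ∑ i, (a i - b i * (A / B)) / Real.log 2
          = (A - B * (A / B)) / Real.log 2 := by
        rw [← Finset.sum_div, Finset.sum_sub_distrib, ← Finset.sum_mul, ← hA, ← hB]
      have h5 : B * (A / B) = A := by field_simp
      rw [h4, h5, sub_self, zero_div, add_zero]
    calc A * Real.logb 2 (A / B)
        = ∑ i, (a i * Real.logb 2 (A / B) + (a i - b i * (A / B)) / Real.log 2) := hsum.symm
      _ ≤ ∑ i, if a i = 0 then (0:ℝ) else a i * Real.logb 2 (a i / b i) :=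
          Finset.sum_le_sum fun i _ => key i

private lemma aux_dccone_convexHull {Z : Type*} (C : Set (Z → ℝ)) (hC : IsDCCone C) :
    IsDCCone (convexHull ℝ C) := by
  constructor
  · intro a ha γ hγ
    have hsub : C ⊆ {x : Z → ℝ | γ • x ∈ convexHull ℝ C} :=
      fun c hc => subset_convexHull ℝ C (hC.1 c hc γ hγ)
    have hcv : Convex ℝ {x : Z → ℝ | γ • x ∈ convexHull ℝ C} := by
      intro x hx y hy α β hα hβ hαβ
      have hkey : γ • (α • x + β • y) = α • (γ • x) + β • (γ • y) := by
        rw [smul_add, smul_comm γ α, smul_comm γ β]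
      have := (convex_convexHull ℝ C) hx hy hα hβ hαβ
      simpa only [Set.mem_setOf_eq, hkey] using this
    exact convexHull_min hsub hcv ha
  · intro a ha b hb
    have hsub : C ⊆ {x : Z → ℝ | x - b ∈ convexHull ℝ C} :=
      fun c hc => subset_convexHull ℝ C (hC.2 c hc b hb)
    have hcv : Convex ℝ {x : Z → ℝ | x - b ∈ convexHull ℝ C} := by
      intro x hx y hy α β hα hβ hαβ
      have hkey : α • x + β • y - b = α • (x - b) + β • (y - b) := by
        ext w
        simp only [Pi.add_apply, Pi.sub_apply, Pi.smul_apply, smul_eq_mul]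
        linear_combination (b w) * hαβ
      have := (convex_convexHull ℝ C) hx hy hα hβ hαβ
      simpa only [Set.mem_setOf_eq, hkey] using this
    exact convexHull_min hsub hcv ha

private lemma aux_separate {Z : Type*} [Fintype Z] (C : Set (Z → ℝ))
    (hC : IsDCCone C) (hne : C.Nonempty) (hconv : convexHull ℝ C ≠ Set.univ) :
    ∃ r ∈ probSimplex Z, ∀ f ∈ C, ∑ z, r z * f z ≤ 0 := by
  classical
  obtain ⟨c₀, hc₀⟩ := hne
  have h0 : (0 : Z → ℝ) ∈ C := by
    have := hC.1 c₀ hc₀ 0 le_rfl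
    rwa [zero_smul] at this
  set D := convexHull ℝ C with hD
  have hDC : IsDCCone D := aux_dccone_convexHull C hC
  have h0D : (0 : Z → ℝ) ∈ D := subset_convexHull ℝ C h0
  have hDconv : Convex ℝ D := convex_convexHull ℝ C
  have hone : (1 : Z → ℝ) ∉ D := by
    intro h1
    apply hconv
    ext g
    simp only [Set.mem_univ, iff_true]
    have hmem : (‖g‖ : ℝ) • (1 : Z → ℝ) ∈ D := hDC.1 _ h1 _ (norm_nonneg g)
    have hsub : ((‖g‖:ℝ) • (1:Z→ℝ)) - ((‖g‖:ℝ) • (1:Z→ℝ) - g) ∈ D := by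
      apply hDC.2 _ hmem
      intro z
      simp only [Pi.sub_apply, Pi.smul_apply, Pi.one_apply, smul_eq_mul, mul_one, sub_nonneg]
      exact le_trans (le_abs_self _) (norm_le_pi_norm g z)
    simpa using hsub
  have honec : (1 : Z → ℝ) ∉ closure D := by
    intro h1
    rw [Metric.mem_closure_iff] at h1
    obtain ⟨c, hcD, hdist⟩ := h1 (1/2) (by norm_num)
    have hc2 : ∀ z, (1/2 : ℝ) ≤ c z := by
      intro z
      have h1 : |(1:ℝ) - c z| ≤ ‖(1:Z→ℝ) - c‖ := by
        have := norm_le_pi_norm ((1:Z→ℝ) - c) z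
        simpa [Real.norm_eq_abs] using this
      rw [dist_eq_norm] at hdist
      have := abs_le.1 (le_trans h1 hdist.le)
      linarith [this.2]
    have hhalf : ((1:ℝ)/2) • (1 : Z → ℝ) ∈ D := by
      have hsub : c - (c - ((1:ℝ)/2) • (1:Z→ℝ)) ∈ D := by
        apply hDC.2 c hcD
        intro z
        simp only [Pi.sub_apply, Pi.smul_apply, Pi.one_apply, smul_eq_mul, mul_one, sub_nonneg]
        exact hc2 z
      simpa using hsub
    have h2 := hDC.1 _ hhalf 2 (by norm_num)
    rw [smul_smul] at h2
    norm_num at h2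
    exact hone h2
  obtain ⟨f, u, hfu, huf⟩ :=
    geometric_hahn_banach_closed_point hDconv.closure isClosed_closure honec
  have hu0 : 0 < u := by
    have := hfu 0 (subset_closure h0D)
    simpa using this
  have hfD : ∀ c ∈ D, f c ≤ 0 := by
    intro c hc
    by_contra h
    push_neg at h
    have ht : (0:ℝ) ≤ 2 * u / f c := by positivity
    have h2 := hfu _ (subset_closure (hDC.1 c hc _ ht))
    rw [map_smul, smul_eq_mul, div_mul_cancel₀ _ (ne_of_gt h)] at h2
    linarith
  set lam : Z → ℝ := fun z => f (Pi.single z 1) with hlam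
  have hlamnn : ∀ z, 0 ≤ lam z := by
    intro z
    have hmem : (0:Z→ℝ) - (Pi.single z 1) ∈ D := by
      apply hDC.2 0 h0D
      intro w
      rcases eq_or_ne w z with rfl | hw
      · simp
      · simp [Pi.single_eq_of_ne hw]
    have h2 := hfD _ hmem
    rw [map_sub, map_zero] at h2
    linarith
  have hfapply : ∀ g : Z → ℝ, f g = ∑ z, g z * lam z := by
    intro g
    have hg : g = ∑ z, g z • (Pi.single z 1 : Z → ℝ) := by
      have h := Finset.univ_sum_single g
      rw [← h]
      apply Finset.sum_congr rfl
      intro z _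
      ext w
      rcases eq_or_ne w z with rfl | hw
      · simp
      · simp [Pi.single_eq_of_ne hw]
    conv_lhs => rw [hg]
    rw [map_sum]
    apply Finset.sum_congr rfl
    intro z _
    rw [map_smul, smul_eq_mul]
  have hS : f (1 : Z → ℝ) = ∑ z, lam z := by
    rw [hfapply]; simp
  have hSpos : 0 < ∑ z, lam z := by
    rw [← hS]; linarith
  refine ⟨fun z => lam z / (∑ w, lam w), ⟨fun z => div_nonneg (hlamnn z) hSpos.le, ?_⟩, ?_⟩
  · rw [← Finset.sum_div, div_self hSpos.ne']
  · intro g hg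
    have hg0 := hfD g (subset_convexHull ℝ C hg)
    rw [hfapply] at hg0
    have heq : ∑ z, lam z / (∑ w, lam w) * g z = (∑ z, g z * lam z) / (∑ w, lam w) := by
      rw [Finset.sum_div]
      apply Finset.sum_congr rfl
      intro z _
      ring
    rw [heq]
    exact div_nonpos_of_nonpos_of_nonneg hg0 hSpos.le

/-- Data processing inequality for `KLdiv` under a channel `r`. -/
private lemma aux_KL_push {Y Z : Type*} [Fintype Y] [Fintype Z]
    (p q : Y → ℝ) (r : Y → Z → ℝ)
    (hp : p ∈ probSimplex Y) (hq : q ∈ probSimplex Y)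
    (hr : ∀ y, r y ∈ probSimplex Z) :
    KLdiv (fun z => ∑ y, p y * r y z) (fun z => ∑ y, q y * r y z) ≤ KLdiv p q := by
  unfold KLdiv
  by_cases hsupp : ∀ y, q y = 0 → p y = 0
  · have hsupp' : ∀ z, (∑ y, q y * r y z) = 0 → (∑ y, p y * r y z) = 0 := by
      intro z hz
      apply Finset.sum_eq_zero
      intro y _
      have hy := (Finset.sum_eq_zero_iff_of_nonneg
        (fun y _ => mul_nonneg (hq.1 y) ((hr y).1 z))).1 hz y (Finset.mem_univ y)
      rcases mul_eq_zero.1 hy with h | h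
      · rw [hsupp y h, zero_mul]
      · rw [h, mul_zero]
    rw [if_pos hsupp, if_pos hsupp', EReal.coe_le_coe_iff]
    have key : ∀ z, (if (∑ y, p y * r y z) = 0 then (0:ℝ)
          else (∑ y, p y * r y z) * Real.logb 2 ((∑ y, p y * r y z) / (∑ y, q y * r y z)))
        ≤ ∑ y, if p y * r y z = 0 then (0:ℝ)
          else (p y * r y z) * Real.logb 2 (p y / q y) := by
      intro z
      have h := aux_logsum (fun y => p y * r y z) (fun y => q y * r y z)
        (fun y => mul_nonneg (hp.1 y) ((hr y).1 z))
        (fun y => mul_nonneg (hq.1 y) ((hr y).1 z))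
        (fun y hy => by
          rcases mul_eq_zero.1 hy with h | h
          · rw [hsupp y h, zero_mul]
          · rw [h, mul_zero])
      refine h.trans (le_of_eq ?_)
      apply Finset.sum_congr rfl
      intro y _
      by_cases hy : p y * r y z = 0
      · simp [hy]
      · rw [if_neg hy, if_neg hy]
        have hrz : r y z ≠ 0 := fun h => hy (by rw [h, mul_zero])
        rw [mul_div_mul_right _ _ hrz]
    calc ∑ z, (if (∑ y, p y * r y z) = 0 then (0:ℝ)
          else (∑ y, p y * r y z) * Real.logb 2 ((∑ y, p y * r y z) / (∑ y, q y * r y z)))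
        ≤ ∑ z, ∑ y, (if p y * r y z = 0 then (0:ℝ)
            else (p y * r y z) * Real.logb 2 (p y / q y)) :=
          Finset.sum_le_sum fun z _ => key z
      _ = ∑ y, ∑ z, (if p y * r y z = 0 then (0:ℝ)
            else (p y * r y z) * Real.logb 2 (p y / q y)) := Finset.sum_comm
      _ = ∑ y, (if p y = 0 then (0:ℝ) else p y * Real.logb 2 (p y / q y)) := by
          apply Finset.sum_congr rfl
          intro y _
          by_cases hy : p y = 0
          · simp [hy]
          · rw [if_neg hy]
            have hterm : ∀ z, (if p y * r y z = 0 then (0:ℝ)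
                else (p y * r y z) * Real.logb 2 (p y / q y))
                = r y z * (p y * Real.logb 2 (p y / q y)) := by
              intro z
              by_cases hz : r y z = 0
              · simp [hz]
              · rw [if_neg (mul_ne_zero hy hz)]; ring
            rw [Finset.sum_congr rfl fun z _ => hterm z, ← Finset.sum_mul, (hr y).2, one_mul]
  · rw [if_neg hsupp]; exact le_top

/-- Monotonicity of the information capacity under nondeterministic degradation. -/
theorem infoCap_mono_of_NDDegraded {Y Z : Type*} [Fintype Y] [Fintype Z]
    (A : Set (Y → ℝ)) (B : Set (Z → ℝ))
    (hA : IsDCCone A) (hB : IsDCCone B)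
    (hAne : A.Nonempty) (hBne : B.Nonempty)
    (hdeg : NDDegraded B A) :
    infoCap B ≤ infoCap A := by
  obtain ⟨F, hFcone, hFconv, hBsub⟩ := hdeg
  obtain ⟨b₀, hb₀⟩ := hBne
  obtain ⟨a₀, ha₀, f₀, hf₀, heq₀⟩ := hBsub hb₀
  have hFne : ∀ y, (F y).Nonempty := fun y => ⟨f₀ y, hf₀ y⟩
  choose r hrsimp hrneg using fun y => aux_separate (F y) (hFcone y) (hFne y) (hFconv y)
  have hpushsimp : ∀ p ∈ probSimplex Y, (fun z => ∑ y, p y * r y z) ∈ probSimplex Z := by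
    intro p hp
    refine ⟨fun z => Finset.sum_nonneg fun y _ => mul_nonneg (hp.1 y) ((hrsimp y).1 z), ?_⟩
    rw [Finset.sum_comm]
    have h1 : ∀ y, ∑ z, p y * r y z = p y := by
      intro y
      rw [← Finset.mul_sum, (hrsimp y).2, mul_one]
    rw [Finset.sum_congr rfl fun y _ => h1 y, hp.2]
  rw [infoCap, infoCap]
  refine le_iInf₂ fun q hq => ?_
  refine le_trans (iInf₂_le (fun z => ∑ y, q y * r y z) (hpushsimp q hq)) ?_
  refine iSup₂_le fun b hb => ?_
  obtain ⟨a, haA, f, hf, heq⟩ := hBsub hb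
  have hba : ∀ y z, f y z = b z - a y := by
    intro y z
    have h := congrFun heq (y, z)
    simp only at h
    linarith [h]
  have hca : ∀ y, ∑ z, r y z * b z ≤ a y := by
    intro y
    have h1 := hrneg y (f y) (hf y)
    have h2 : ∑ z, r y z * f y z = (∑ z, r y z * b z) - a y := by
      have ht : ∀ z, r y z * f y z = r y z * b z - r y z * a y := by
        intro z
        rw [hba y z]; ring
      rw [Finset.sum_congr rfl fun z _ => ht z, Finset.sum_sub_distrib, ← Finset.sum_mul,
        (hrsimp y).2, one_mul]
    rw [h2] at h1
    linarith
  refine le_trans ?_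
    (le_iSup₂ (f := fun (a : Y → ℝ) (_ : a ∈ A) =>
      ⨅ p ∈ {p ∈ probSimplex Y | ∑ y, p y * a y ≤ 0}, KLdiv p q) a haA)
  refine le_iInf₂ fun p hp => ?_
  obtain ⟨hpsimp, hpa⟩ := hp
  have hfeas : (fun z => ∑ y, p y * r y z) ∈
      {p' ∈ probSimplex Z | ∑ z, p' z * b z ≤ 0} := by
    refine ⟨hpushsimp p hpsimp, ?_⟩
    have h1 : ∑ z, (∑ y, p y * r y z) * b z = ∑ y, p y * (∑ z, r y z * b z) := by
      simp_rw [Finset.sum_mul, Finset.mul_sum, mul_assoc]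
      exact Finset.sum_comm
    rw [h1]
    exact le_trans
      (Finset.sum_le_sum fun y _ => mul_le_mul_of_nonneg_left (hca y) (hpsimp.1 y)) hpa
  refine le_trans (iInf₂_le (fun z => ∑ y, p y * r y z) hfeas) ?_
  exact aux_KL_push p q r hpsimp hq hrsimp


end
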